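/- arXiv:1307.2077 — 5 statements merged into one kernel-verified Lean document; each statement's English description precedes it below -/
import Mathlib

section
/- Let n ≥ 2 and let W ⊆ ℂ^{n+2} be a 4-dimensional complex subspace that is stable under conjugation (W̄ = W) and on which the bilinear form B is nondegenerate. Then the real subspace W_ℝ := W ∩ ℝ^{n+1,1} is 4-dimensional, and the restriction of ( , ) to W_ℝ has signature (3,1) (i.e. W_ℝ admits a basis whose Gram matrix is diag(1,1,1,−1)) if and only if every 2-dimensional B-isotropic complex subspace U ⊆ W satisfies dim_ℂ(U ∩ Ū) = 1. -/
/-!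
Because `ℝ^{n+1,1}` is Lorentzian, two orthogonal real vectors of non-positive length are
linearly dependent. Hence the real form on `W_ℝ`, which has real dimension 4, complexifies to
`W` and is therefore nondegenerate, is either positive definite or of signature `(3,1)`.

If `W_ℝ` is definite, an orthonormal basis `e` gives the isotropic plane `⟨e₀ + i e₁, e₂ + i e₃⟩`,
and any isotropic `U ⊆ W` meets `Ū` trivially: for `u ∈ U ∩ Ū`, `Re u` and `Im u` are real null
vectors of `U`.

If `W_ℝ` contains a timelike `v` and `U ⊆ W` is an isotropic plane, then `U = Ū` would make
`U_ℝ` a real isotropic plane, while `U ∩ Ū = 0` would give `W = U ⊕ Ū`, so `v = a + ā` with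
`a ∈ U`, and `Re a`, `Im a` would be orthogonal and both timelike.
-/

noncomputable section

open Module

/-- The complexification `ℂ^{n+2}` of `ℝ^{n+1,1}`. -/
abbrev Cn (n : ℕ) := Fin (n + 2) → ℂ

/-- The complex-bilinear extension `B` of the signature `(n+1,1)` inner product on
`ℝ^{n+1,1}`. -/
def Bf (n : ℕ) (v w : Cn n) : ℂ :=
  ∑ i : Fin (n + 2), (if (i : ℕ) < n + 1 then 1 else -1) * v i * w i

lemma Bf_add_left {n : ℕ} (v v' w : Cn n) :
    Bf n (v + v') w = Bf n v w + Bf n v' w := by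
  simp only [Bf, Pi.add_apply, ← Finset.sum_add_distrib]
  exact Finset.sum_congr rfl fun i _ => by ring

lemma Bf_smul_left {n : ℕ} (c : ℂ) (v w : Cn n) :
    Bf n (c • v) w = c * Bf n v w := by
  simp only [Bf, Pi.smul_apply, smul_eq_mul, Finset.mul_sum]
  exact Finset.sum_congr rfl fun i _ => by ring

lemma Bf_zero_left {n : ℕ} (w : Cn n) : Bf n 0 w = 0 := by
  simp [Bf]

/-- Complex conjugation on `ℂ^{n+2}`, as a `conj`-semilinear automorphism;
its fixed point set is `ℝ^{n+1,1}`. -/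
def conjSL (n : ℕ) : Cn n →ₛₗ[starRingEnd ℂ] Cn n where
  toFun v := fun i => starRingEnd ℂ (v i)
  map_add' a b := by funext i; simp
  map_smul' c v := by funext i; simp

instance : RingHomSurjective (starRingEnd ℂ) :=
  ⟨fun x => ⟨starRingEnd ℂ x, by simp⟩⟩

/-- The conjugate `Ū` of a complex subspace `U` of `ℂ^{n+2}`. -/
def conjSub {n : ℕ} (U : Submodule ℂ (Cn n)) : Submodule ℂ (Cn n) :=
  U.map (conjSL n)

/-- The real points `ℝ^{n+1,1}` inside `ℂ^{n+2}`, as a real subspace. -/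
def realSub (n : ℕ) : Submodule ℝ (Cn n) where
  carrier := {v | ∀ i, starRingEnd ℂ (v i) = v i}
  add_mem' := by
    intro a b ha hb i
    simp only [Pi.add_apply, map_add, ha i, hb i]
  zero_mem' := by intro i; simp
  smul_mem' := by
    intro c v hv i
    simp only [Pi.smul_apply, Complex.real_smul, map_mul, Complex.conj_ofReal, hv i]

/-- The real points `W ∩ ℝ^{n+1,1}` of a complex subspace `W ⊆ ℂ^{n+2}`. -/
def realPoints {n : ℕ} (W : Submodule ℂ (Cn n)) : Submodule ℝ (Cn n) :=
  (W.restrictScalars ℝ) ⊓ realSub n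

/-- The Gram matrix `diag(1,1,1,-1)`. -/
def gram31 (i j : Fin 4) : ℂ :=
  if i = j then (if (i : ℕ) < 3 then 1 else -1) else 0

/-- A real subspace `P` of `ℂ^{n+2}` has signature `(3,1)` if it admits a
basis whose Gram matrix with respect to `B` is `diag(1,1,1,-1)`. -/
def hasSig31 (n : ℕ) (P : Submodule ℝ (Cn n)) : Prop :=
  ∃ b : Fin 4 → Cn n, (∀ i, b i ∈ P) ∧
    Submodule.span ℝ (Set.range b) = P ∧
    ∀ i j, Bf n (b i) (b j) = gram31 i j

/-- The orthogonal complement of a subspace with respect to `B`. -/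
def perp (n : ℕ) (V : Submodule ℂ (Cn n)) : Submodule ℂ (Cn n) where
  carrier := {v | ∀ w ∈ V, Bf n v w = 0}
  add_mem' := by
    intro a b ha hb w hw
    rw [Bf_add_left, ha w hw, hb w hw, add_zero]
  zero_mem' := by
    intro w hw
    exact Bf_zero_left w
  smul_mem' := by
    intro c v hv w hw
    rw [Bf_smul_left, hv w hw, mul_zero]

/-- `ρ` is the reflection across `V`: the identity on `V` and minus the identity
on `V^⊥`. -/
def IsReflection (n : ℕ) (V : Submodule ℂ (Cn n)) (ρ : Cn n →ₗ[ℂ] Cn n) : Prop :=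
  (∀ v ∈ V, ρ v = v) ∧ (∀ v ∈ perp n V, ρ v = -v)

/-- The automorphism `Γ^{ℓ⁺}_{ℓ⁻}(λ)`, where `ℓ⁺, ℓ⁻` are the complementary null
lines spanned by `u` and `w`: it is multiplication by `λ` on `ℓ⁺`, by `λ⁻¹` on
`ℓ⁻` and the identity on `(ℓ⁺ ⊕ ℓ⁻)^⊥`. -/
def GammaL (n : ℕ) (u w : Cn n) (lam : ℂ) : Cn n →ₗ[ℂ] Cn n where
  toFun v := v + ((lam - 1) * (Bf n v w / Bf n u w)) • u
      + ((lam⁻¹ - 1) * (Bf n v u / Bf n u w)) • w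
  map_add' a b := by
    simp only [Bf_add_left]
    module
  map_smul' c v := by
    simp only [Bf_smul_left, RingHom.id_apply]
    module

/-- `λ ↦ λ* = 1/λ̄`. -/
def cstar (z : ℂ) : ℂ := (starRingEnd ℂ z)⁻¹

/-- The linear fractional transformation appearing in the simple factor
`p^V_{α,L}`. -/
def psi (α lam : ℂ) : ℂ := (1 + α) * (lam - α) / ((1 - α) * (lam + α))

/-- The simple factor `p^V_{α,L}(λ) = Γ^L_{ρ_V L}((1+α)(λ-α)/((1-α)(λ+α)))`,
where `ρ` is the reflection across `V` and `ℓ` spans the null line `L`. -/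
def pSF (n : ℕ) (ρ : Cn n →ₗ[ℂ] Cn n) (ℓ : Cn n) (α lam : ℂ) : Cn n →ₗ[ℂ] Cn n :=
  GammaL n ℓ (ρ ℓ) (psi α lam)

/-- The value `p^V_{α,L}(∞) = Γ^L_{ρ_V L}((1+α)/(1-α))`. -/
def pSFinf (n : ℕ) (ρ : Cn n →ₗ[ℂ] Cn n) (ℓ : Cn n) (α : ℂ) : Cn n →ₗ[ℂ] Cn n :=
  GammaL n ℓ (ρ ℓ) ((1 + α) / (1 - α))

theorem LinearMap.BilinForm.exists_orthogonal_basis_self_eq_one_or_neg_one {M : Type*}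
    [AddCommGroup M] [Module ℝ M] [FiniteDimensional ℝ M] {B : LinearMap.BilinForm ℝ M}
    (hB : B.IsSymm) (hsep : B.SeparatingLeft) {k : ℕ} (hk : finrank ℝ M = k) :
    ∃ v : Basis (Fin k) ℝ M, B.IsOrthoᵢ v ∧ ∀ i, B (v i) (v i) = 1 ∨ B (v i) (v i) = -1 := by
  subst hk
  obtain ⟨v, hv⟩ :=
    LinearMap.BilinForm.exists_orthogonal_basis (LinearMap.BilinForm.isSymm_iff.1 hB)
  have hd := hv.not_isOrtho_basis_self_of_separatingLeft hsep
  let c i : ℝˣ := Units.mk0 (√|B (v i) (v i)|)⁻¹ (by simpa using hd i)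
  refine ⟨v.unitsSMul c, fun i j hij => ?_, fun i => ?_⟩
  · show B _ _ = 0
    simp [Basis.unitsSMul_apply, Units.smul_def, hv hij]
  · simp only [Basis.unitsSMul_apply, Units.smul_def, map_smul, LinearMap.smul_apply,
      smul_eq_mul, c, Units.val_mk0]
    rw [← mul_assoc, ← mul_inv, ← sq, Real.sq_sqrt (abs_nonneg _), inv_mul_eq_div]
    rcases (hd i).lt_or_gt with h | h
    · right; rw [abs_of_neg h, div_neg, div_self h.ne]
    · left; rw [abs_of_pos h, div_self h.ne']

lemma Submodule.span_range_coe_basis {R M ι : Type*} [Semiring R] [AddCommMonoid M]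
    [Module R M] {P : Submodule R M} (v : Basis ι R P) :
    Submodule.span R (Set.range fun i => (v i : M)) = P := by
  rw [show (Set.range fun i => (v i : M)) = P.subtype '' Set.range v from
    (Set.range_comp _ _).symm ▸ rfl, Submodule.span_image, v.span_eq, Submodule.map_subtype_top]

lemma Bf_comm {n : ℕ} (v w : Cn n) : Bf n v w = Bf n w v :=
  Finset.sum_congr rfl fun _ _ => by ring

def BfL (n : ℕ) : Cn n →ₗ[ℂ] Cn n →ₗ[ℂ] ℂ :=
  LinearMap.mk₂ ℂ (Bf n) Bf_add_left Bf_smul_left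
    (fun v w w' => by rw [Bf_comm, Bf_add_left, Bf_comm w, Bf_comm w'])
    (fun c v w => by rw [Bf_comm, Bf_smul_left, Bf_comm]; rfl)

section Bilinear

variable {n : ℕ} (u v w : Cn n) (c : ℂ) (r : ℝ)

lemma Bf_add_right : Bf n u (v + w) = Bf n u v + Bf n u w := (BfL n u).map_add v w
lemma Bf_smul_right : Bf n v (c • w) = c * Bf n v w := (BfL n v).map_smul c w
lemma Bf_sub_left : Bf n (u - v) w = Bf n u w - Bf n v w := (BfL n).map_sub₂ u v w
lemma Bf_sub_right : Bf n u (v - w) = Bf n u v - Bf n u w := (BfL n u).map_sub v w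
lemma Bf_real_smul_left : Bf n (r • v) w = r * Bf n v w := by
  rw [← Complex.coe_smul, Bf_smul_left]
lemma Bf_real_smul_right : Bf n v (r • w) = r * Bf n v w := by
  rw [← Complex.coe_smul, Bf_smul_right]

end Bilinear

lemma conjSL_apply {n : ℕ} (v : Cn n) (i : Fin (n + 2)) :
    conjSL n v i = starRingEnd ℂ (v i) := rfl

@[simp] lemma conjSL_conjSL {n : ℕ} (v : Cn n) : conjSL n (conjSL n v) = v := by
  funext i; simp [conjSL_apply]

lemma conjSL_injective (n : ℕ) : Function.Injective (conjSL n) :=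
  Function.LeftInverse.injective conjSL_conjSL

lemma Bf_conjSL {n : ℕ} (v w : Cn n) :
    Bf n (conjSL n v) (conjSL n w) = starRingEnd ℂ (Bf n v w) := by
  simp only [Bf, map_sum, map_mul, conjSL_apply]
  refine Finset.sum_congr rfl fun i _ => ?_
  split_ifs <;> simp

lemma mem_realSub_iff {n : ℕ} {v : Cn n} : v ∈ realSub n ↔ conjSL n v = v :=
  funext_iff.symm

lemma Bf_eq_ofReal_re {n : ℕ} {v w : Cn n} (hv : v ∈ realSub n) (hw : w ∈ realSub n) :
    Bf n v w = (Bf n v w).re := by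
  rw [eq_comm, ← Complex.conj_eq_iff_re, ← Bf_conjSL, mem_realSub_iff.1 hv,
    mem_realSub_iff.1 hw]

lemma mem_conjSub_iff {n : ℕ} {U : Submodule ℂ (Cn n)} {v : Cn n} :
    v ∈ conjSub U ↔ conjSL n v ∈ U :=
  ⟨by rintro ⟨u, hu, rfl⟩; simpa using hu, fun h => ⟨_, h, conjSL_conjSL v⟩⟩

def rePart {n : ℕ} (v : Cn n) : Cn n := fun i => ((v i).re : ℂ)

def imPart {n : ℕ} (v : Cn n) : Cn n := fun i => ((v i).im : ℂ)

section ReIm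

variable {n : ℕ} (v : Cn n)

lemma rePart_mem_realSub : rePart v ∈ realSub n := fun _ => Complex.conj_ofReal _
lemma imPart_mem_realSub : imPart v ∈ realSub n := fun _ => Complex.conj_ofReal _

lemma rePart_add_I_smul_imPart : rePart v + Complex.I • imPart v = v := by
  funext i; apply Complex.ext <;> simp [rePart, imPart]

lemma rePart_eq : rePart v = (2⁻¹ : ℂ) • (v + conjSL n v) := by
  funext i
  change ((v i).re : ℂ) = 2⁻¹ * (v i + starRingEnd ℂ (v i))
  rw [Complex.re_eq_add_conj]; ring

lemma imPart_eq : imPart v = (2⁻¹ * Complex.I : ℂ) • (conjSL n v - v) := by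
  funext i
  change ((v i).im : ℂ) = 2⁻¹ * Complex.I * (starRingEnd ℂ (v i) - v i)
  rw [Complex.im_eq_sub_conj, div_eq_mul_inv, mul_inv, Complex.inv_I]; ring

variable {v} {w : Cn n}

lemma im_eq_zero_of_mem_realSub (hv : v ∈ realSub n) (i : Fin (n + 2)) : (v i).im = 0 :=
  Complex.conj_eq_iff_im.1 (hv i)

lemma rePart_add_I_smul (hv : v ∈ realSub n) (hw : w ∈ realSub n) :
    rePart (v + Complex.I • w) = v := by
  funext i
  apply Complex.ext <;> simp [rePart, im_eq_zero_of_mem_realSub hv, im_eq_zero_of_mem_realSub hw]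

lemma imPart_add_I_smul (hv : v ∈ realSub n) (hw : w ∈ realSub n) :
    imPart (v + Complex.I • w) = w := by
  funext i
  apply Complex.ext <;> simp [imPart, im_eq_zero_of_mem_realSub hv, im_eq_zero_of_mem_realSub hw]

end ReIm

section Signature

variable {n : ℕ} {u v w : Cn n}

lemma Bf_self_re_eq_sum_sq (hu : u ∈ realSub n) (hlast : u (Fin.last (n + 1)) = 0) :
    (Bf n u u).re = ∑ i : Fin (n + 1), (u i.castSucc).re ^ 2 := by
  simp [Bf, Fin.sum_univ_castSucc, hlast, Complex.re_sum, Complex.mul_re,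
    im_eq_zero_of_mem_realSub hu, sq]

lemma eq_zero_of_Bf_self_re_nonpos (hu : u ∈ realSub n) (hlast : u (Fin.last (n + 1)) = 0)
    (h : (Bf n u u).re ≤ 0) : u = 0 := by
  rw [Bf_self_re_eq_sum_sq hu hlast] at h
  have hsq := (Finset.sum_eq_zero_iff_of_nonneg fun i _ => sq_nonneg _).1
    (le_antisymm h (Finset.sum_nonneg fun i _ => sq_nonneg _))
  funext i
  refine Complex.ext ?_ (im_eq_zero_of_mem_realSub hu i)
  induction i using Fin.lastCases with
  | last => simp [hlast]
  | cast i => simpa using hsq i (Finset.mem_univ _)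

/-- Some combination of `v` and `w` lies in the hyperplane `x_{n+1} = 0`, where the form is
definite. -/
lemma not_linearIndependent_of_Bf_nonpos (hv : v ∈ realSub n) (hw : w ∈ realSub n)
    (hvw : Bf n v w = 0) (hvv : (Bf n v v).re ≤ 0) (hww : (Bf n w w).re ≤ 0) :
    ¬ LinearIndependent ℝ ![v, w] := by
  rw [LinearIndependent.pair_iff]
  intro hli
  obtain ⟨r, hr⟩ : ∃ r : ℝ, v (Fin.last (n + 1)) = r := ⟨_, (Complex.conj_eq_iff_re.1 (hv _)).symm⟩
  obtain ⟨s, hs⟩ : ∃ s : ℝ, w (Fin.last (n + 1)) = s := ⟨_, (Complex.conj_eq_iff_re.1 (hw _)).symm⟩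
  have hcomb : s • v + (-r) • w = 0 := by
    refine eq_zero_of_Bf_self_re_nonpos ?_ ?_ ?_
    · exact (realSub n).add_mem ((realSub n).smul_mem _ hv) ((realSub n).smul_mem _ hw)
    · simp only [Pi.add_apply, Pi.smul_apply, Complex.real_smul, hr, hs]
      push_cast; ring
    · simp only [Bf_add_left, Bf_add_right, Bf_real_smul_left, Bf_real_smul_right, hvw,
        Bf_comm w v, mul_zero, add_zero, zero_add, Complex.add_re, Complex.re_ofReal_mul]
      nlinarith [sq_nonneg r, sq_nonneg s]
  by_cases hr0 : r = 0
  · have hv0 : v = 0 := eq_zero_of_Bf_self_re_nonpos hv (by rw [hr, hr0, Complex.ofReal_zero]) hvv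
    simpa using hli 1 0 (by simp [hv0])
  · exact hr0 (neg_eq_zero.1 (hli s (-r) hcomb).2)

lemma Bf_ne_zero_of_Bf_self_re_neg (hv : v ∈ realSub n) (hw : w ∈ realSub n)
    (hvv : (Bf n v v).re < 0) (hww : (Bf n w w).re < 0) : Bf n v w ≠ 0 := by
  intro hvw
  refine not_linearIndependent_of_Bf_nonpos hv hw hvw hvv.le hww.le
    (LinearIndependent.pair_iff.2 fun s t hst => ?_)
  have h1 := congrArg (fun x => (Bf n x v).re) hst
  have h2 := congrArg (fun x => (Bf n x w).re) hst
  simp only [Bf_add_left, Bf_real_smul_left, hvw, Bf_comm w v, Bf_zero_left, mul_zero,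
    add_zero, zero_add, Complex.re_ofReal_mul, Complex.zero_re] at h1 h2
  exact ⟨(mul_eq_zero.1 h1).resolve_right hvv.ne, (mul_eq_zero.1 h2).resolve_right hww.ne⟩

end Signature

section Realification

variable {n : ℕ} {V : Submodule ℂ (Cn n)} {v : Cn n}

lemma conjSL_mem (hV : conjSub V = V) (hv : v ∈ V) : conjSL n v ∈ V :=
  mem_conjSub_iff.1 (hV.symm ▸ hv)

lemma rePart_mem_realPoints (hV : conjSub V = V) (hv : v ∈ V) : rePart v ∈ realPoints V :=
  ⟨by rw [rePart_eq]; exact V.smul_mem _ (V.add_mem hv (conjSL_mem hV hv)), rePart_mem_realSub v⟩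

lemma imPart_mem_realPoints (hV : conjSub V = V) (hv : v ∈ V) : imPart v ∈ realPoints V :=
  ⟨by rw [imPart_eq]; exact V.smul_mem _ (V.sub_mem (conjSL_mem hV hv) hv), imPart_mem_realSub v⟩

lemma finrank_restrictScalars_real (V : Submodule ℂ (Cn n)) :
    finrank ℝ (V.restrictScalars ℝ) = 2 * finrank ℂ V := by
  have h := Module.finrank_mul_finrank ℝ ℂ V
  rw [Complex.finrank_real_complex] at h
  rw [h]
  exact ((Submodule.restrictScalarsEquiv ℝ ℂ (Cn n) V).restrictScalars ℝ).finrank_eq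

/-- `(a, b) ↦ a + i b` identifies `V_ℝ × V_ℝ` with `V` over `ℝ`. -/
lemma finrank_realPoints (hV : conjSub V = V) : finrank ℝ (realPoints V) = finrank ℂ V := by
  let Φ : realPoints V × realPoints V →ₗ[ℝ] Cn n :=
    (realPoints V).subtype.coprod (Complex.I • (realPoints V).subtype)
  have hΦ : Function.Injective Φ := by
    rw [← LinearMap.ker_eq_bot, LinearMap.ker_eq_bot']
    rintro ⟨⟨a, ha⟩, ⟨b, hb⟩⟩ hab
    have hab' : a + Complex.I • b = 0 := hab
    refine Prod.ext (Subtype.ext ?_) (Subtype.ext ?_)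
    · show a = 0
      rw [← rePart_add_I_smul ha.2 hb.2, hab']; funext i; simp [rePart]
    · show b = 0
      rw [← imPart_add_I_smul ha.2 hb.2, hab']; funext i; simp [imPart]
  have hrange : LinearMap.range Φ = V.restrictScalars ℝ := by
    refine le_antisymm ?_ fun v hv => ?_
    · rintro _ ⟨⟨a, b⟩, rfl⟩
      exact V.add_mem a.2.1 (V.smul_mem _ b.2.1)
    · exact ⟨(⟨_, rePart_mem_realPoints hV hv⟩, ⟨_, imPart_mem_realPoints hV hv⟩),
        rePart_add_I_smul_imPart v⟩
  have := LinearMap.finrank_range_of_inj hΦ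
  rw [hrange, finrank_restrictScalars_real, Module.finrank_prod] at this
  omega

end Realification

section IsotropicPlanes

variable {n : ℕ} {U W : Submodule ℂ (Cn n)}

lemma finrank_conjSub (U : Submodule ℂ (Cn n)) : finrank ℂ (conjSub U) = finrank ℂ U := by
  let e := Submodule.equivMapOfInjective (conjSL n) (conjSL_injective n) U
  have := rank_eq_of_equiv_equiv (starRingEnd ℂ) e.toAddEquiv
    (Function.Involutive.bijective Complex.conj_conj) (fun c x => e.map_smulₛₗ c x)
  exact (congrArg Cardinal.toNat this).symm

lemma Bf_imPart_self_of_isotropic {a : Cn n} (ha : Bf n a a = 0) :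
    Bf n (imPart a) (imPart a) = Bf n (rePart a) (rePart a) := by
  have hc : Bf n (conjSL n a) (conjSL n a) = 0 := by rw [Bf_conjSL, ha, map_zero]
  rw [rePart_eq, imPart_eq]
  simp only [Bf_smul_left, Bf_smul_right, Bf_add_left, Bf_add_right, Bf_sub_left,
    Bf_sub_right, ha, hc, Bf_comm (conjSL n a) a]
  ring_nf; simp only [Complex.I_sq]; ring

lemma Bf_rePart_imPart_of_isotropic {a : Cn n} (ha : Bf n a a = 0) :
    Bf n (rePart a) (imPart a) = 0 := by
  have hc : Bf n (conjSL n a) (conjSL n a) = 0 := by rw [Bf_conjSL, ha, map_zero]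
  rw [rePart_eq, imPart_eq]
  simp only [Bf_smul_left, Bf_smul_right, Bf_add_left, Bf_sub_right, ha, hc,
    Bf_comm (conjSL n a) a]
  ring

lemma conjSub_ne_self_of_isotropic (hU2 : finrank ℂ U = 2)
    (hiso : ∀ u ∈ U, ∀ v ∈ U, Bf n u v = 0) : conjSub U ≠ U := by
  intro hU
  let b := Module.finBasisOfFinrankEq ℝ (realPoints U) ((finrank_realPoints hU).trans hU2)
  have hli : LinearIndependent ℝ ![(b 0 : Cn n), b 1] := by
    refine LinearIndependent.pair_iff.2 fun s t hst => ?_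
    have h := Fintype.linearIndependent_iff.1 b.linearIndependent ![s, t]
      (Subtype.ext (by simpa [Fin.sum_univ_two] using hst))
    exact ⟨h 0, h 1⟩
  have hiso' : ∀ i j, Bf n (b i) (b j) = 0 := fun i j => hiso _ (b i).2.1 _ (b j).2.1
  exact not_linearIndependent_of_Bf_nonpos (b 0).2.2 (b 1).2.2 (hiso' 0 1)
    (by simp [hiso']) (by simp [hiso']) hli

lemma inf_conjSub_ne_bot_of_Bf_self_re_neg (hdim : finrank ℂ W = 4) (hconj : conjSub W = W)
    (hneg : ∃ v ∈ realPoints W, (Bf n v v).re < 0) (hUW : U ≤ W) (hU2 : finrank ℂ U = 2)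
    (hiso : ∀ u ∈ U, ∀ v ∈ U, Bf n u v = 0) : U ⊓ conjSub U ≠ ⊥ := by
  intro hbot
  obtain ⟨v, ⟨hvW, hvR⟩, hvneg⟩ := hneg
  have hsup : U ⊔ conjSub U = W := by
    refine Submodule.eq_of_le_of_finrank_eq (sup_le hUW (hconj ▸ Submodule.map_mono hUW)) ?_
    have := Submodule.finrank_sup_add_finrank_inf_eq U (conjSub U)
    rw [hbot, finrank_bot, finrank_conjSub] at this
    omega
  obtain ⟨a, ha, b, hb, rfl⟩ := Submodule.mem_sup.1 (hsup ▸ hvW)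
  -- `v = a + b` is real, so `a - b̄ = ā - b` lies in `U ∩ Ū`
  have hab : b = conjSL n a := by
    have hv := mem_realSub_iff.1 hvR
    rw [map_add] at hv
    have hmem : a - conjSL n b ∈ U ⊓ conjSub U := by
      refine ⟨U.sub_mem ha (mem_conjSub_iff.1 hb), mem_conjSub_iff.2 ?_⟩
      rw [map_sub, conjSL_conjSL, show conjSL n a - b = a - conjSL n b by
        linear_combination (norm := module) hv]
      exact U.sub_mem ha (mem_conjSub_iff.1 hb)
    rw [hbot, Submodule.mem_bot, sub_eq_zero] at hmem
    rw [hmem, conjSL_conjSL]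
  have hv : a + b = (2 : ℂ) • rePart a := by
    rw [hab, rePart_eq, smul_smul]; norm_num
  have hre : (Bf n (rePart a) (rePart a)).re < 0 := by
    rw [hv, Bf_smul_left, Bf_smul_right] at hvneg
    simp only [Complex.mul_re, Complex.re_ofNat, Complex.im_ofNat, zero_mul, sub_zero] at hvneg
    linarith
  exact Bf_ne_zero_of_Bf_self_re_neg (rePart_mem_realSub a) (imPart_mem_realSub a) hre
    (Bf_imPart_self_of_isotropic (hiso a ha a ha) ▸ hre)
    (Bf_rePart_imPart_of_isotropic (hiso a ha a ha))

lemma finrank_inf_conjSub_eq_one (hdim : finrank ℂ W = 4) (hconj : conjSub W = W)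
    (hneg : ∃ v ∈ realPoints W, (Bf n v v).re < 0) (hUW : U ≤ W) (hU2 : finrank ℂ U = 2)
    (hiso : ∀ u ∈ U, ∀ v ∈ U, Bf n u v = 0) : finrank ℂ ↥(U ⊓ conjSub U) = 1 := by
  have hle : finrank ℂ ↥(U ⊓ conjSub U) ≤ 2 :=
    (Submodule.finrank_mono inf_le_left).trans_eq hU2
  have h0 : finrank ℂ ↥(U ⊓ conjSub U) ≠ 0 := fun h =>
    inf_conjSub_ne_bot_of_Bf_self_re_neg hdim hconj hneg hUW hU2 hiso
      (Submodule.finrank_eq_zero.1 h)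
  have h2 : finrank ℂ ↥(U ⊓ conjSub U) ≠ 2 := fun h => by
    have hinf := Submodule.eq_of_le_of_finrank_eq inf_le_left (h.trans hU2.symm)
    exact conjSub_ne_self_of_isotropic hU2 hiso
      (Submodule.eq_of_le_of_finrank_eq (inf_eq_left.1 hinf) (finrank_conjSub U).symm).symm
  omega

end IsotropicPlanes

def reBf (n : ℕ) : LinearMap.BilinForm ℝ (Cn n) :=
  ((BfL n).restrictScalars₁₂ ℝ ℝ).compr₂ Complex.reLm

lemma reBf_apply {n : ℕ} (v w : Cn n) : reBf n v w = (Bf n v w).re := rfl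

section OrthonormalBasis

variable {n : ℕ} {W : Submodule ℂ (Cn n)}

lemma exists_orthonormal_basis_realPoints (hdim : finrank ℂ W = 4) (hconj : conjSub W = W)
    (hnd : ∀ v ∈ W, (∀ w ∈ W, Bf n v w = 0) → v = 0) :
    ∃ v : Basis (Fin 4) ℝ (realPoints W), (∀ i j, i ≠ j → Bf n (v i) (v j) = 0) ∧
      ∀ i, Bf n (v i) (v i) = 1 ∨ Bf n (v i) (v i) = -1 := by
  let B := (reBf n).restrict (realPoints W)
  have hsymm : B.IsSymm := LinearMap.BilinForm.isSymm_def.2 fun x y => by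
    simp [B, reBf_apply, Bf_comm]
  have hsep : B.SeparatingLeft := fun x hx => by
    have h0 : ∀ y ∈ realPoints W, Bf n x y = 0 := fun y hy => by
      rw [Bf_eq_ofReal_re x.2.2 hy.2]; exact_mod_cast hx ⟨y, hy⟩
    refine Subtype.ext (hnd x x.2.1 fun w hw => ?_)
    rw [← rePart_add_I_smul_imPart w, Bf_add_right, Bf_smul_right,
      h0 _ (rePart_mem_realPoints hconj hw), h0 _ (imPart_mem_realPoints hconj hw)]
    simp
  obtain ⟨v, hv, hε⟩ := LinearMap.BilinForm.exists_orthogonal_basis_self_eq_one_or_neg_one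
    hsymm hsep ((finrank_realPoints hconj).trans hdim)
  have hreal : ∀ i j, Bf n (v i) (v j) = B (v i) (v j) := fun i j =>
    Bf_eq_ofReal_re (v i).2.2 (v j).2.2
  refine ⟨v, fun i j hij => ?_, fun i => ?_⟩
  · rw [hreal, hv hij, Complex.ofReal_zero]
  · rcases hε i with h | h <;> simp [hreal, h]

end OrthonormalBasis

section Signature31

variable {n : ℕ} {W : Submodule ℂ (Cn n)}

lemma hasSig31_of_orthonormal_basis (v : Basis (Fin 4) ℝ (realPoints W))
    (horth : ∀ i j, i ≠ j → Bf n (v i) (v j) = 0)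
    (hε : ∀ i, Bf n (v i) (v i) = 1 ∨ Bf n (v i) (v i) = -1)
    (hneg : ∃ i₀, Bf n (v i₀) (v i₀) = -1) : hasSig31 n (realPoints W) := by
  obtain ⟨i₀, hi₀⟩ := hneg
  have hpos : ∀ j ≠ i₀, Bf n (v j) (v j) = 1 := fun j hj => (hε j).resolve_right fun h =>
    Bf_ne_zero_of_Bf_self_re_neg (v i₀).2.2 (v j).2.2 (by simp [hi₀]) (by simp [h])
      (horth _ _ (Ne.symm hj))
  let σ := Equiv.swap i₀ 3
  refine ⟨fun i => v (σ i), fun i => (v (σ i)).2, ?_, fun i j => ?_⟩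
  · exact (congrArg _ (σ.surjective.range_comp fun i => (v i : Cn n))).trans
      (Submodule.span_range_coe_basis v)
  · by_cases hij : i = j
    · subst hij
      by_cases h3 : i = 3
      · simp [h3, σ, hi₀, gram31]
      · have hi : (i : ℕ) < 3 := by omega
        rw [hpos _ (by simpa [σ, Equiv.swap_apply_eq_iff] using h3)]
        simp [gram31, hi]
    · rw [horth _ _ (σ.injective.ne hij)]
      simp [gram31, hij]

end Signature31

section DefiniteCase

variable {n : ℕ} {U W : Submodule ℂ (Cn n)}

lemma inf_conjSub_eq_bot_of_isotropic (hpos : ∀ x ∈ realPoints W, Bf n x x = 0 → x = 0)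
    (hUW : U ≤ W) (hiso : ∀ u ∈ U, ∀ v ∈ U, Bf n u v = 0) : U ⊓ conjSub U = ⊥ := by
  refine (Submodule.eq_bot_iff _).2 fun u ⟨hu, hu'⟩ => ?_
  have hc : conjSL n u ∈ U := mem_conjSub_iff.1 hu'
  have hre : rePart u ∈ U := by rw [rePart_eq]; exact U.smul_mem _ (U.add_mem hu hc)
  have him : imPart u ∈ U := by rw [imPart_eq]; exact U.smul_mem _ (U.sub_mem hc hu)
  rw [← rePart_add_I_smul_imPart u,
    hpos _ ⟨hUW hre, rePart_mem_realSub u⟩ (hiso _ hre _ hre),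
    hpos _ ⟨hUW him, imPart_mem_realSub u⟩ (hiso _ him _ him), smul_zero, add_zero]

lemma eq_zero_of_Bf_self_eq_zero {P : Submodule ℝ (Cn n)} {ι : Type*} [Fintype ι]
    [DecidableEq ι] (v : Basis ι ℝ P) (hv : ∀ i j, Bf n (v i) (v j) = if i = j then 1 else 0)
    {x : Cn n} (hx : x ∈ P) (h0 : Bf n x x = 0) : x = 0 := by
  let B := (reBf n).restrict P
  have hvB : ∀ i j, B (v i) (v j) = if i = j then 1 else 0 := fun i j => by
    show (Bf n (v i) (v j)).re = _
    rw [hv]; split_ifs <;> simp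
  have hB : B ⟨x, hx⟩ ⟨x, hx⟩ = ∑ i, (v.repr ⟨x, hx⟩ i) ^ 2 := by
    conv_lhs => rw [← v.sum_repr ⟨x, hx⟩]
    simp only [map_sum, LinearMap.sum_apply, map_smul, LinearMap.smul_apply, smul_eq_mul, hvB,
      mul_ite, mul_one, mul_zero, Finset.sum_ite_eq', Finset.mem_univ, if_true, sq]
  have hsq := (Finset.sum_eq_zero_iff_of_nonneg fun i _ => sq_nonneg _).1
    (hB.symm.trans (by simp [B, reBf_apply, h0]))
  have : (⟨x, hx⟩ : P) = 0 := v.repr.injective (Finsupp.ext fun i => by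
    simpa using hsq i (Finset.mem_univ i))
  exact congrArg Subtype.val this

/-- The plane spanned by `e₀ + i e₁` and `e₂ + i e₃`. -/
lemma exists_isotropic_plane {e : Fin 4 → Cn n} (heW : ∀ i, e i ∈ W)
    (he : ∀ i j, Bf n (e i) (e j) = if i = j then 1 else 0) :
    ∃ U : Submodule ℂ (Cn n), U ≤ W ∧ finrank ℂ U = 2 ∧ ∀ u ∈ U, ∀ v ∈ U, Bf n u v = 0 := by
  set w₁ := e 0 + Complex.I • e 1
  set w₂ := e 2 + Complex.I • e 3
  have hB : ∀ a b c d : ℂ, Bf n (a • w₁ + b • w₂) (c • w₁ + d • w₂) = 0 := fun a b c d => by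
    simp only [w₁, w₂, Bf_add_left, Bf_add_right, Bf_smul_left, Bf_smul_right, he]
    simp only [Fin.reduceEq, if_true, if_false]
    ring_nf; rw [Complex.I_sq]; ring
  have hli : LinearIndependent ℂ ![w₁, w₂] := LinearIndependent.pair_iff.2 fun s t hst => by
    have h0 := congrArg (fun x => Bf n x (e 0)) hst
    have h2 := congrArg (fun x => Bf n x (e 2)) hst
    simp only [w₁, w₂, Bf_add_left, Bf_smul_left, he, Bf_zero_left] at h0 h2
    simp only [Fin.reduceEq, if_true, if_false] at h0 h2
    exact ⟨by linear_combination h0, by linear_combination h2⟩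
  refine ⟨Submodule.span ℂ {w₁, w₂}, ?_, ?_, fun u hu v hv => ?_⟩
  · rw [Submodule.span_le, Set.insert_subset_iff, Set.singleton_subset_iff]
    exact ⟨W.add_mem (heW 0) (W.smul_mem _ (heW 1)), W.add_mem (heW 2) (W.smul_mem _ (heW 3))⟩
  · rw [← Matrix.range_cons_cons_empty, finrank_span_eq_card hli, Fintype.card_fin]
  · obtain ⟨a, b, rfl⟩ := Submodule.mem_span_pair.1 hu
    obtain ⟨c, d, rfl⟩ := Submodule.mem_span_pair.1 hv
    exact hB a b c d

end DefiniteCase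

theorem statement0_general (n : ℕ) (W : Submodule ℂ (Cn n))
    (hdim : Module.finrank ℂ W = 4)
    (hconj : conjSub W = W)
    (hnd : ∀ v ∈ W, (∀ w ∈ W, Bf n v w = 0) → v = 0) :
    Module.finrank ℝ (realPoints W) = 4 ∧
      (hasSig31 n (realPoints W) ↔
        ∀ U : Submodule ℂ (Cn n), U ≤ W → Module.finrank ℂ U = 2 →
          (∀ u ∈ U, ∀ v ∈ U, Bf n u v = 0) →
          Module.finrank ℂ ↥(U ⊓ conjSub U) = 1) := by
  refine ⟨(finrank_realPoints hconj).trans hdim, ⟨fun ⟨b, hbW, _, hb⟩ => ?_, fun hplanes => ?_⟩⟩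
  · have hneg : (Bf n (b 3) (b 3)).re < 0 := by simp [hb, gram31]
    exact fun U => finrank_inf_conjSub_eq_one hdim hconj ⟨b 3, hbW 3, hneg⟩
  obtain ⟨v, horth, hε⟩ := exists_orthonormal_basis_realPoints hdim hconj hnd
  by_cases hneg : ∃ i₀, Bf n (v i₀) (v i₀) = -1
  · exact hasSig31_of_orthonormal_basis v horth hε hneg
  push Not at hneg
  have hv : ∀ i j, Bf n (v i) (v j) = if i = j then 1 else 0 := fun i j => by
    split_ifs with hij
    · exact hij ▸ (hε i).resolve_right (hneg i)
    · exact horth i j hij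
  obtain ⟨U, hUW, hU2, hiso⟩ := exists_isotropic_plane (fun i => (v i).2.1) hv
  have hbot := inf_conjSub_eq_bot_of_isotropic
    (fun x hx => eq_zero_of_Bf_self_eq_zero v hv hx) hUW hiso
  have hU1 := hplanes U hUW hU2 hiso
  rw [hbot, finrank_bot] at hU1
  exact absurd hU1 zero_ne_one

/-- Let `W ⊆ ℂ^{n+2}` be a 4-dimensional conjugation-stable complex
subspace on which `B` is nondegenerate.  Then `W_ℝ := W ∩ ℝ^{n+1,1}` is 4-dimensional
over `ℝ`, and `(,)` restricted to `W_ℝ` has signature `(3,1)` if and only if every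
2-dimensional `B`-isotropic complex subspace `U ⊆ W` satisfies `dim_ℂ (U ∩ Ū) = 1`. -/
theorem statement0 (n : ℕ) (hn : 2 ≤ n) (W : Submodule ℂ (Cn n))
    (hdim : Module.finrank ℂ W = 4)
    (hconj : conjSub W = W)
    (hnd : ∀ v ∈ W, (∀ w ∈ W, Bf n v w = 0) → v = 0) :
    Module.finrank ℝ (realPoints W) = 4 ∧
      (hasSig31 n (realPoints W) ↔
        ∀ U : Submodule ℂ (Cn n), U ≤ W → Module.finrank ℂ U = 2 →
          (∀ u ∈ U, ∀ v ∈ U, Bf n u v = 0) →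
          Module.finrank ℂ ↥(U ⊓ conjSub U) = 1) :=
  statement0_general n W hdim hconj hnd

end
end

section
/- Let j : ℂ⁴ → ℂ⁴ be a quaternionic structure, i.e. a conjugate-linear map with j ∘ j = −id. Let X be a ℂ-linear endomorphism of ℂ⁴ commuting with j (X ∘ j = j ∘ X), let μ₀ ∈ ℂ ∖ ℝ and μ₁ := conj(μ₀). Then X² − (μ₀+μ₁)X + μ₀μ₁ id = 0 if and only if the μ₀-eigenspace W := ker(X − μ₀ id) has complex dimension 2. In that case jW = ker(X − μ₁ id) and ℂ⁴ = W ⊕ jW. -/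
/-!
Because `X` commutes with `j`, the conjugate-linear bijection `j` maps the `μ₀`-eigenspace `W`
onto the `μ̄₀`-eigenspace, so both have dimension `dim W`; they are independent since `μ₀ ∉ ℝ`
gives `μ₀ ≠ μ̄₀`. The quadratic expression factors as `(X - μ₀)(X - μ̄₀)`, which vanishes exactly
when the two eigenspaces span `ℂ⁴`, i.e. when `2 dim W = 4`.
-/

noncomputable section

abbrev C4 := Fin 4 → ℂ

open Module Module.End

theorem Submodule.finrank_map_of_injective {K V : Type*} [Field K] [AddCommGroup V] [Module K V]
    {σ σ' : K →+* K} [RingHomInvPair σ σ'] [RingHomInvPair σ' σ] {f : V →ₛₗ[σ] V}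
    (hf : Function.Injective f) (p : Submodule K V) :
    finrank K (p.map f) = finrank K p := by
  let e := p.equivMapOfInjective f hf
  have hσ : Function.Bijective σ := Function.bijective_iff_has_inverse.mpr
    ⟨σ', fun _ => RingHomInvPair.comp_apply_eq, fun _ => RingHomInvPair.comp_apply_eq₂⟩
  have hrank := rank_eq_of_equiv_equiv σ e.toAddEquiv hσ e.map_smulₛₗ
  simp only [finrank, hrank]

theorem Submodule.sup_eq_top_iff_finrank_add_eq {K V : Type*} [Field K] [AddCommGroup V]
    [Module K V] [FiniteDimensional K V] {p q : Submodule K V} (h : Disjoint p q) :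
    p ⊔ q = ⊤ ↔ finrank K p + finrank K q = finrank K V := by
  have hsum := Submodule.finrank_sup_add_finrank_inf_eq p q
  rw [h.eq_bot, finrank_bot, add_zero] at hsum
  rw [← hsum]
  exact ⟨fun htop => by rw [htop, finrank_top], Submodule.eq_top_of_finrank_eq⟩

namespace Module.End

variable {K V : Type*} [Field K] [AddCommGroup V] [Module K V]

theorem ker_sub_smul_id (X : V →ₗ[K] V) (μ : K) :
    LinearMap.ker (X - μ • LinearMap.id) = eigenspace X μ :=
  eigenspace_def.symm

theorem sub_smul_id_comp_sub_smul_id (X : V →ₗ[K] V) (a b : K) :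
    (X - a • LinearMap.id) ∘ₗ (X - b • LinearMap.id) =
      X ∘ₗ X - (a + b) • X + (a * b) • LinearMap.id := by
  ext v
  simp only [LinearMap.comp_apply, LinearMap.sub_apply, LinearMap.add_apply,
    LinearMap.smul_apply, LinearMap.id_apply, map_sub, map_smul]
  module

theorem sub_smul_id_comp_sub_smul_id_eq_zero_iff (X : V →ₗ[K] V) {a b : K} (hab : a ≠ b) :
    (X - a • LinearMap.id) ∘ₗ (X - b • LinearMap.id) = 0 ↔
      eigenspace X a ⊔ eigenspace X b = ⊤ := by
  set A := X - a • LinearMap.id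
  set B := X - b • LinearMap.id
  have hcomm : A ∘ₗ B = B ∘ₗ A := by
    rw [sub_smul_id_comp_sub_smul_id, sub_smul_id_comp_sub_smul_id, add_comm a, mul_comm a]
  rw [← ker_sub_smul_id, ← ker_sub_smul_id]
  constructor
  · intro h
    refine eq_top_iff.mpr fun v _ => ?_
    have hBv : B v ∈ LinearMap.ker A := by
      rw [LinearMap.mem_ker, ← LinearMap.comp_apply, h, LinearMap.zero_apply]
    have hAv : A v ∈ LinearMap.ker B := by
      rw [LinearMap.mem_ker, ← LinearMap.comp_apply, ← hcomm, h, LinearMap.zero_apply]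
    have hv : v = (a - b)⁻¹ • (B v - A v) := by
      simp only [A, B, LinearMap.sub_apply, LinearMap.smul_apply, LinearMap.id_apply]
      rw [sub_sub_sub_cancel_left, ← sub_smul, smul_smul, inv_mul_cancel₀ (sub_ne_zero.mpr hab),
        one_smul]
    rw [hv]
    exact Submodule.smul_mem _ _ <|
      Submodule.sub_mem _ (Submodule.mem_sup_left hBv) (Submodule.mem_sup_right hAv)
  · intro h
    refine LinearMap.ker_eq_top.mp <| eq_top_iff.mpr (h ▸ sup_le ?_ (LinearMap.ker_le_ker_comp B A))
    exact hcomm ▸ LinearMap.ker_le_ker_comp A B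

variable {σ : K →+* K} {j : V →ₛₗ[σ] V} {X : V →ₗ[K] V}

theorem map_eigenspace_le [RingHomSurjective σ] (hXj : ∀ v, X (j v) = j (X v)) (μ : K) :
    (eigenspace X μ).map j ≤ eigenspace X (σ μ) := by
  rintro _ ⟨v, hv, rfl⟩
  rw [SetLike.mem_coe, mem_eigenspace_iff] at hv
  rw [mem_eigenspace_iff, hXj, hv, LinearMap.map_smulₛₗ]

theorem map_eigenspace_eq [RingHomInvPair σ σ] (hj : ∀ v, j (j v) = -v)
    (hXj : ∀ v, X (j v) = j (X v)) (μ : K) :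
    (eigenspace X μ).map j = eigenspace X (σ μ) := by
  refine le_antisymm (map_eigenspace_le hXj μ) fun w hw => ?_
  have hjw : j w ∈ eigenspace X μ := by
    simpa only [RingHomInvPair.comp_apply_eq] using map_eigenspace_le hXj (σ μ) ⟨w, hw, rfl⟩
  exact ⟨-(j w), neg_mem hjw, by rw [map_neg, hj, neg_neg]⟩

end Module.End

/-- Let `j` be a quaternionic structure on `ℂ⁴` (a conjugate-linear
map with `j² = -1`), `X` a `ℂ`-linear endomorphism commuting with `j`, `μ₀ ∈ ℂ ∖ ℝ`
and `μ₁ = conj μ₀`.  Then `X² - (μ₀+μ₁)X + μ₀μ₁ = 0` iff the `μ₀`-eigenspace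
`W = ker (X - μ₀)` is 2-dimensional; in that case `jW = ker (X - μ₁)` and
`ℂ⁴ = W ⊕ jW`. -/
theorem statement11
    (j : C4 →ₛₗ[starRingEnd ℂ] C4) (hj : ∀ v, j (j v) = -v)
    (X : C4 →ₗ[ℂ] C4) (hXj : ∀ v, X (j v) = j (X v))
    (μ₀ : ℂ) (hμ₀ : μ₀.im ≠ 0) (μ₁ : ℂ) (hμ₁ : μ₁ = starRingEnd ℂ μ₀) :
    (X ∘ₗ X - (μ₀ + μ₁) • X + (μ₀ * μ₁) • LinearMap.id = 0 ↔
      Module.finrank ℂ (LinearMap.ker (X - μ₀ • LinearMap.id)) = 2) ∧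
    (X ∘ₗ X - (μ₀ + μ₁) • X + (μ₀ * μ₁) • LinearMap.id = 0 →
      Submodule.map j (LinearMap.ker (X - μ₀ • LinearMap.id)) =
          LinearMap.ker (X - μ₁ • LinearMap.id) ∧
        IsCompl (LinearMap.ker (X - μ₀ • LinearMap.id))
          (Submodule.map j (LinearMap.ker (X - μ₀ • LinearMap.id)))) := by
  have hne : μ₀ ≠ μ₁ := fun h => hμ₀ <| by
    simpa [hμ₁, self_eq_neg] using congrArg Complex.im h
  have hjW : (eigenspace X μ₀).map j = eigenspace X μ₁ := hμ₁ ▸ map_eigenspace_eq hj hXj μ₀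
  have hj_inj : Function.Injective j := fun a b hab => by
    simpa [hj] using congrArg j hab
  have hdim : finrank ℂ (eigenspace X μ₁) = finrank ℂ (eigenspace X μ₀) :=
    hjW ▸ Submodule.finrank_map_of_injective hj_inj _
  have hdisj : Disjoint (eigenspace X μ₀) (eigenspace X μ₁) := disjoint_genEigenspace X hne 1 1
  rw [ker_sub_smul_id, ker_sub_smul_id, ← sub_smul_id_comp_sub_smul_id,
    sub_smul_id_comp_sub_smul_id_eq_zero_iff X hne, Submodule.sup_eq_top_iff_finrank_add_eq hdisj,
    hdim, hjW, finrank_fin_fun]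
  refine ⟨by omega, fun h => ⟨rfl, hdisj, codisjoint_iff.mpr ?_⟩⟩
  rw [Submodule.sup_eq_top_iff_finrank_add_eq hdisj, hdim, finrank_fin_fun, h]
end
end

section
/- Let M be a complex vector space, μ₀ ≠ μ₁ ∈ ℂ, and let X, D, b, b* be ℂ-linear endomorphisms of M with (X − μ₀)(X − μ₁) = 0. Then the two identities (X − μ₀) ∘ (D + b ∘ (X − μ₁)) = 0 and (X − μ₁) ∘ (D + b* ∘ (X − μ₀)) = 0 hold simultaneously if and only if (μ₁ − μ₀)D = X(b* − b)X + (μ₀ b − μ₁ b*)X + X(μ₁ b − μ₀ b*) + μ₀μ₁(b* − b). -/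
/-!
Put `A = X - μ₀` and `B = X - μ₁`, so that `A - B = μ₁ - μ₀ =: c` is a nonzero scalar and
`A B = B A = 0`. The right-hand side of the Riccati equation is exactly `B b* A - A b B`.
Since `c = A - B`, the two eigenbundle identities `A D = -A b B` and `B D = -B b* A` add up
to `c D = B b* A - A b B`; conversely, multiplying this equation on the left by `A` (resp. `B`)
and using `A² = c A`, `B² = -c B` recovers `c` times each identity.
-/

section

variable {K R : Type*} [Field K] [Ring R] [Algebra K R] {A B : R} {c : K}

theorem riccati_rhs_eq (X b bs : R) (μ₀ μ₁ : K) :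
    X * (bs - b) * X + (μ₀ • b - μ₁ • bs) * X + X * (μ₁ • b - μ₀ • bs) + (μ₀ * μ₁) • (bs - b) =
      (X - μ₁ • 1) * bs * (X - μ₀ • 1) - (X - μ₀ • 1) * b * (X - μ₁ • 1) := by
  simp only [sub_mul, mul_sub, smul_mul_assoc, mul_smul_comm, mul_one, one_mul, smul_sub,
    smul_smul]
  module

theorem mul_eq_smul_of_sub_eq_smul_one (hsub : A - B = c • 1) (t : R) :
    A * t - B * t = c • t := by
  rw [← sub_mul, hsub, smul_one_mul]

theorem commute_of_sub_eq_smul_one (hsub : A - B = c • 1) : Commute A B := by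
  rw [sub_eq_iff_eq_add'] at hsub
  rw [hsub]
  exact (Commute.refl B).add_left ((Commute.one_left B).smul_left c)

theorem mul_self_eq_smul_of_sub_eq_smul_one (hsub : A - B = c • 1) (hAB : A * B = 0) :
    A * A = c • A :=
  calc A * A = A * (A - B) + A * B := by noncomm_ring
    _ = c • A := by rw [hAB, hsub, mul_smul_comm, mul_one, add_zero]

theorem mul_self_eq_neg_smul_of_sub_eq_smul_one (hsub : A - B = c • 1) (hBA : B * A = 0) :
    B * B = -(c • B) :=
  calc B * B = B * A - B * (A - B) := by noncomm_ring
    _ = -(c • B) := by rw [hBA, hsub, mul_smul_comm, mul_one, zero_sub]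

theorem mul_add_eq_zero_and_iff_smul_eq (hc : c ≠ 0) (hsub : A - B = c • 1) (hAB : A * B = 0)
    (D b bs : R) :
    (A * (D + b * B) = 0 ∧ B * (D + bs * A) = 0) ↔ c • D = B * bs * A - A * b * B := by
  have hBA : B * A = 0 := (commute_of_sub_eq_smul_one hsub).eq ▸ hAB
  constructor
  · rintro ⟨hA, hB⟩
    rw [mul_add, ← mul_assoc, add_eq_zero_iff_eq_neg] at hA hB
    rw [← mul_eq_smul_of_sub_eq_smul_one hsub, hA, hB]
    abel
  · intro h
    constructor
    · rw [← smul_eq_zero_iff_right hc, ← mul_smul_comm, smul_add, h]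
      calc A * (B * bs * A - A * b * B + c • (b * B))
          = (A * B) * bs * A - (A * A - c • A) * b * B := by
            simp only [mul_add, mul_sub, sub_mul, mul_assoc, mul_smul_comm, smul_mul_assoc]
            abel
        _ = 0 := by rw [hAB, mul_self_eq_smul_of_sub_eq_smul_one hsub hAB]; simp
    · rw [← smul_eq_zero_iff_right hc, ← mul_smul_comm, smul_add, h]
      calc B * (B * bs * A - A * b * B + c • (bs * A))
          = (B * B + c • B) * bs * A - (B * A) * b * B := by
            simp only [mul_add, mul_sub, add_mul, mul_assoc, mul_smul_comm, smul_mul_assoc]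
            abel
        _ = 0 := by rw [hBA, mul_self_eq_neg_smul_of_sub_eq_smul_one hsub hBA]; simp

end

/-- Let `M` be a complex vector space, `μ₀ ≠ μ₁ ∈ ℂ`, and
`X, D, b, b*` endomorphisms of `M` with `(X - μ₀)(X - μ₁) = 0`.  Then
`(X - μ₀)(D + b(X - μ₁)) = 0` and `(X - μ₁)(D + b*(X - μ₀)) = 0` hold simultaneously
iff `(μ₁ - μ₀)D = X(b* - b)X + (μ₀b - μ₁b*)X + X(μ₁b - μ₀b*) + μ₀μ₁(b* - b)`. -/
theorem statement12 (M : Type*) [AddCommGroup M] [Module ℂ M]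
    (μ₀ μ₁ : ℂ) (hμ : μ₀ ≠ μ₁)
    (X D b bs : Module.End ℂ M)
    (hX : (X - μ₀ • 1) * (X - μ₁ • 1) = 0) :
    ((X - μ₀ • 1) * (D + b * (X - μ₁ • 1)) = 0 ∧
      (X - μ₁ • 1) * (D + bs * (X - μ₀ • 1)) = 0) ↔
    (μ₁ - μ₀) • D =
      X * (bs - b) * X + (μ₀ • b - μ₁ • bs) * X + X * (μ₁ • b - μ₀ • bs)
        + (μ₀ * μ₁) • (bs - b) := by
  have hsub : (X - μ₀ • 1) - (X - μ₁ • 1) = (μ₁ - μ₀) • (1 : Module.End ℂ M) := by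
    rw [sub_sub_sub_cancel_left, sub_smul]
  rw [riccati_rhs_eq]
  exact mul_add_eq_zero_and_iff_smul_eq (sub_ne_zero.mpr hμ.symm) hsub hX D b bs
end

section
/- Let A be a complex unital associative normed algebra, E a real normed vector space, U ⊆ E open, and μ₀, μ₁ ∈ ℂ. Let β, β* : U → L(E, A) be maps into continuous ℝ-linear maps from E to A, and let X : U → A be differentiable on U and satisfy, for all u ∈ U and v ∈ E, the Riccati equation (μ₁−μ₀)·(D_vX)(u) = X(u)(β*_u(v) − β_u(v))X(u) + (μ₀ β_u(v) − μ₁ β*_u(v))X(u) + X(u)(μ₁ β_u(v) − μ₀ β*_u(v)) + μ₀μ₁(β*_u(v) − β_u(v)), where (D_vX)(u) denotes the Fréchet derivative of X at u in direction v. Define I : U → A by I(u) := X(u)² − (μ₀+μ₁)X(u) + μ₀μ₁·1. Then I is differentiable and satisfies the linear equation (μ₁−μ₀)·(D_vI)(u) = I(u)(β*_u(v) − β_u(v))X(u) + X(u)(β*_u(v) − β_u(v))I(u) + I(u)(μ₁ β_u(v) − μ₀ β*_u(v)) + (μ₀ β_u(v) − μ₁ β*_u(v))I(u) for all u ∈ U,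 v ∈ E. -/
/-!
Writing `x = X(u)` and `d = D_vX(u)`, the derivative of `I = X² - (μ₀+μ₁)X + μ₀μ₁` is
`x d + d x - (μ₀+μ₁) d`. Multiplying by `μ₁ - μ₀` and substituting the Riccati equation for
`(μ₁ - μ₀) d` leaves a noncommutative polynomial identity in `x, β, β*`, which regroups into
the stated linear equation for `I`.
-/

theorem smul_quadratic_derivative_of_riccati {R A : Type*} [CommRing R] [Ring A] [Algebra R A]
    (c μ₀ μ₁ : R) (x d b s : A)
    (hd : c • d = x * (s - b) * x + (μ₀ • b - μ₁ • s) * x + x * (μ₁ • b - μ₀ • s)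
      + (μ₀ * μ₁) • (s - b)) :
    c • (x * d + d * x - (μ₀ + μ₁) • d) =
      (x ^ 2 - (μ₀ + μ₁) • x + (μ₀ * μ₁) • (1 : A)) * (s - b) * x
        + x * (s - b) * (x ^ 2 - (μ₀ + μ₁) • x + (μ₀ * μ₁) • (1 : A))
        + (x ^ 2 - (μ₀ + μ₁) • x + (μ₀ * μ₁) • (1 : A)) * (μ₁ • b - μ₀ • s)
        + (μ₀ • b - μ₁ • s) * (x ^ 2 - (μ₀ + μ₁) • x + (μ₀ * μ₁) • (1 : A)) := by
  have hc : c • (x * d + d * x - (μ₀ + μ₁) • d) =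
      x * (c • d) + (c • d) * x - (μ₀ + μ₁) • (c • d) := by
    rw [smul_sub, smul_add, smul_mul_assoc, mul_smul_comm, smul_comm c]
  rw [hc, hd]
  simp only [sq, sub_mul, mul_sub, add_mul, mul_add, smul_mul_assoc, mul_smul_comm,
    smul_smul, smul_sub, smul_add, mul_one, one_mul, mul_assoc]
  module

section Quadratic

variable {𝕜 𝕜' E A : Type*} [NontriviallyNormedField 𝕜] [NormedAddCommGroup E]
  [NormedSpace 𝕜 E] [NormedRing A] [NormedAlgebra 𝕜 A] [NormedField 𝕜'] [NormedAlgebra 𝕜' A]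
  [SMulCommClass 𝕜 𝕜' A] {f : E → A} {x : E}

theorem HasFDerivAt.sq_sub_smul_add_smul_one {f' : E →L[𝕜] A} (hf : HasFDerivAt f f' x)
    (a b : 𝕜') :
    HasFDerivAt (fun y => f y ^ 2 - a • f y + b • (1 : A))
      (f x • f' + f'.smulRight (f x) - a • f') x := by
  simp only [sq]
  exact ((hf.mul' hf).sub (hf.const_smul a)).add_const _

theorem DifferentiableAt.fderiv_sq_sub_smul_add_smul_one_apply (hf : DifferentiableAt 𝕜 f x)
    (a b : 𝕜') (v : E) :
    fderiv 𝕜 (fun y => f y ^ 2 - a • f y + b • (1 : A)) x v =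
      f x * fderiv 𝕜 f x v + fderiv 𝕜 f x v * f x - a • fderiv 𝕜 f x v := by
  rw [(hf.hasFDerivAt.sq_sub_smul_add_smul_one a b).fderiv]
  simp only [sub_apply, add_apply, smul_apply, ContinuousLinearMap.smulRight_apply,
    smul_eq_mul]

end Quadratic

theorem statement13_general
    (A : Type*) [NormedRing A] [NormedAlgebra ℂ A]
    (E : Type*) [NormedAddCommGroup E] [NormedSpace ℝ E]
    (U : Set E)
    (μ₀ μ₁ : ℂ)
    (β βs : E → (E →L[ℝ] A))
    (X : E → A)
    (hXdiff : ∀ u ∈ U, DifferentiableAt ℝ X u)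
    (hRiccati : ∀ u ∈ U, ∀ v : E,
      (μ₁ - μ₀) • fderiv ℝ X u v =
        X u * (βs u v - β u v) * X u + (μ₀ • β u v - μ₁ • βs u v) * X u
          + X u * (μ₁ • β u v - μ₀ • βs u v) + (μ₀ * μ₁) • (βs u v - β u v))
    (I : E → A)
    (hI : ∀ u, I u = X u ^ 2 - (μ₀ + μ₁) • X u + (μ₀ * μ₁) • (1 : A)) :
    ∀ u ∈ U, DifferentiableAt ℝ I u ∧
      ∀ v : E,
        (μ₁ - μ₀) • fderiv ℝ I u v =
          I u * (βs u v - β u v) * X u + X u * (βs u v - β u v) * I u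
            + I u * (μ₁ • β u v - μ₀ • βs u v) + (μ₀ • β u v - μ₁ • βs u v) * I u := by
  intro u hu
  obtain rfl : I = fun w => X w ^ 2 - (μ₀ + μ₁) • X w + (μ₀ * μ₁) • (1 : A) := funext hI
  refine ⟨((hXdiff u hu).hasFDerivAt.sq_sub_smul_add_smul_one _ _).differentiableAt,
    fun v => ?_⟩
  rw [(hXdiff u hu).fderiv_sq_sub_smul_add_smul_one_apply]
  exact smul_quadratic_derivative_of_riccati _ _ _ _ _ _ _ (hRiccati u hu v)

/-- Let `A` be a complex unital associative normed algebra, `E` a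
real normed space, `U ⊆ E` open, and let `X : U → A` satisfy the Riccati equation
`(μ₁-μ₀) dX = X(β*-β)X + (μ₀β-μ₁β*)X + X(μ₁β-μ₀β*) + μ₀μ₁(β*-β)` on `U`.  Then
`I := X² - (μ₀+μ₁)X + μ₀μ₁` is differentiable and satisfies the linear equation
`(μ₁-μ₀) dI = I(β*-β)X + X(β*-β)I + I(μ₁β-μ₀β*) + (μ₀β-μ₁β*)I`. -/
theorem statement13
    (A : Type*) [NormedRing A] [NormedAlgebra ℂ A]
    (E : Type*) [NormedAddCommGroup E] [NormedSpace ℝ E]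
    (U : Set E) (hU : IsOpen U)
    (μ₀ μ₁ : ℂ)
    (β βs : E → (E →L[ℝ] A))
    (X : E → A)
    (hXdiff : ∀ u ∈ U, DifferentiableAt ℝ X u)
    (hRiccati : ∀ u ∈ U, ∀ v : E,
      (μ₁ - μ₀) • fderiv ℝ X u v =
        X u * (βs u v - β u v) * X u + (μ₀ • β u v - μ₁ • βs u v) * X u
          + X u * (μ₁ • β u v - μ₀ • βs u v) + (μ₀ * μ₁) • (βs u v - β u v))
    (I : E → A)
    (hI : ∀ u, I u = X u ^ 2 - (μ₀ + μ₁) • X u + (μ₀ * μ₁) • (1 : A)) :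
    ∀ u ∈ U, DifferentiableAt ℝ I u ∧
      ∀ v : E,
        (μ₁ - μ₀) • fderiv ℝ I u v =
          I u * (βs u v - β u v) * X u + X u * (βs u v - β u v) * I u
            + I u * (μ₁ • β u v - μ₀ • βs u v) + (μ₀ • β u v - μ₁ • βs u v) * I u :=
  statement13_general A E U μ₀ μ₁ β βs X hXdiff hRiccati I hI
end

section
/- Let A be a complex unital associative normed algebra, E a real normed vector space, U ⊆ E open, and μ₀ ≠ μ₁ ∈ ℂ. Let β, β* : U → L(E, A) be differentiable A-valued 1-forms which are flat, i.e. for all u ∈ U and v, w ∈ E: (D_vβ)(u)(w) − (D_wβ)(u)(v) + β_u(v)β_u(w) − β_u(w)β_u(v) = 0 and likewise for β*. Define the 2×2-matrix-valued 1-form ω by ω_u(v) := (1/(μ₁−μ₀))·[[μ₁β*_u(v) − μ₀β_u(v), μ₀μ₁(β_u(v) − β*_u(v))], [β*_u(v) − β_u(v), μ₁β_u(v) − μ₀β*_u(v)]], with entries in A. Then ω is flat: for all u ∈ U and v, w ∈ E, (D_vω)(u)(w) − (D_wω)(u)(v) + ω_u(v)ω_u(w) − ω_u(w)ω_u(v)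 = 0. -/
/-! With `g = !![μ₀, μ₁; 1, 1]`, the form `ω = g · diag(β, β*) · g⁻¹` is a constant gauge
transform of the `A × A`-valued form `(β, β*)`. A continuous multiplicative linear map carries the
curvature of a form to the curvature of its image, and the curvature of `(β, β*)` is `(0, 0)`. -/

attribute [local instance] Matrix.normedAddCommGroup Matrix.normedSpace

section Curvature

variable {E R S : Type*} [NormedAddCommGroup E] [NormedSpace ℝ E]
  [NormedAddCommGroup R] [NormedSpace ℝ R] [Mul R] [NormedAddCommGroup S] [NormedSpace ℝ S] [Mul S]

noncomputable def curvature (γ : E → E → R) (u v w : E) : R :=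
  fderiv ℝ (fun x => γ x w) u v - fderiv ℝ (fun x => γ x v) u w + γ u v * γ u w - γ u w * γ u v

variable {u : E}

theorem curvature_clm_apply {β : E → E →L[ℝ] R} (hβ : DifferentiableAt ℝ β u) (v w : E) :
    curvature (fun x y => β x y) u v w =
      fderiv ℝ β u v w - fderiv ℝ β u w v + β u v * β u w - β u w * β u v := by
  simp only [curvature, fderiv_clm_apply hβ (differentiableAt_const _), fderiv_const_apply,
    ContinuousLinearMap.comp_zero, zero_add, ContinuousLinearMap.flip_apply]

theorem curvature_prodMk {γ : E → E → R} {δ : E → E → S}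
    (hγ : ∀ y, DifferentiableAt ℝ (fun x => γ x y) u)
    (hδ : ∀ y, DifferentiableAt ℝ (fun x => δ x y) u) (v w : E) :
    curvature (fun x y => (γ x y, δ x y)) u v w = (curvature γ u v w, curvature δ u v w) := by
  simp only [curvature, (hγ _).fderiv_prodMk (hδ _), ContinuousLinearMap.prod_apply,
    Prod.mk_sub_mk, Prod.mk_add_mk, Prod.mk_mul_mk]

theorem curvature_comp_of_map_mul {F : Type*} [FunLike F R S] [ContinuousLinearMapClass F ℝ R S]
    (φ : F) (hφ : ∀ a b, φ (a * b) = φ a * φ b)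
    {γ : E → E → R} (hγ : ∀ y, DifferentiableAt ℝ (fun x => γ x y) u) (v w : E) :
    curvature (fun x y => φ (γ x y)) u v w = φ (curvature γ u v w) := by
  let L : R →L[ℝ] S := ⟨φ, map_continuous φ⟩
  have hL a : L a = φ a := rfl
  have hφγ y : fderiv ℝ (fun x => φ (γ x y)) u = L.comp (fderiv ℝ (γ · y) u) :=
    (L.hasFDerivAt.comp u (hγ y).hasFDerivAt).fderiv
  simp only [curvature, hφγ, ContinuousLinearMap.comp_apply, hL, map_sub, map_add, hφ]

end Curvature

section DiagonalConj

variable {A : Type*} [NormedRing A] [NormedAlgebra ℂ A]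

/-- `(a, b) ↦ g · diag(a, b) · g⁻¹` for `g = !![μ₀, μ₁; 1, 1]`, multiplied out. -/
noncomputable def diagonalConj (μ₀ μ₁ : ℂ) : A × A →L[ℝ] Matrix (Fin 2) (Fin 2) A where
  toFun p := (μ₁ - μ₀)⁻¹ • Matrix.of
    ![![μ₁ • p.2 - μ₀ • p.1, (μ₀ * μ₁) • (p.1 - p.2)], ![p.2 - p.1, μ₁ • p.1 - μ₀ • p.2]]
  map_add' p q := by
    ext i j
    fin_cases i <;> fin_cases j <;>
      simp only [Matrix.add_apply, Matrix.smul_apply, Matrix.of_apply, Matrix.cons_val',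
        Matrix.cons_val_zero, Matrix.cons_val_one, Matrix.cons_val_fin_one, Prod.fst_add,
        Prod.snd_add, Fin.isValue, Fin.zero_eta, Fin.mk_one] <;> module
  map_smul' c p := by
    ext i j
    fin_cases i <;> fin_cases j <;>
      simp only [Matrix.smul_apply, Matrix.of_apply, Matrix.cons_val', Matrix.cons_val_zero,
        Matrix.cons_val_one, Matrix.cons_val_fin_one, Prod.smul_fst, Prod.smul_snd,
        RingHom.id_apply, Fin.isValue, Fin.zero_eta, Fin.mk_one] <;> module
  cont := by
    refine continuous_const_smul _ |>.comp <| continuous_pi fun i => continuous_pi fun j => ?_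
    fin_cases i <;> fin_cases j <;>
      simp only [Matrix.of_apply, Matrix.cons_val', Matrix.cons_val_zero, Matrix.cons_val_one,
        Matrix.cons_val_fin_one, Fin.isValue, Fin.zero_eta, Fin.mk_one] <;> fun_prop

theorem diagonalConj_mul {μ₀ μ₁ : ℂ} (h : μ₀ ≠ μ₁) (p q : A × A) :
    diagonalConj μ₀ μ₁ (p * q) = diagonalConj μ₀ μ₁ p * diagonalConj μ₀ μ₁ q := by
  have h' : μ₁ - μ₀ ≠ 0 := sub_ne_zero.mpr h.symm
  ext i j
  fin_cases i <;> fin_cases j <;>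
  · simp only [diagonalConj, ContinuousLinearMap.coe_mk', LinearMap.coe_mk, AddHom.coe_mk,
      Matrix.smul_of, Matrix.smul_cons, Matrix.smul_empty, Matrix.of_apply, Matrix.cons_val',
      Matrix.cons_val_zero, Matrix.cons_val_one, Matrix.cons_val_fin_one, Fin.isValue,
      Fin.zero_eta, Fin.mk_one, Matrix.mul_apply, Fin.sum_univ_two, Prod.fst_mul, Prod.snd_mul,
      smul_sub, smul_smul, mul_sub, sub_mul, Algebra.mul_smul_comm, Algebra.smul_mul_assoc]
    match_scalars <;> field_simp <;> ring

end DiagonalConj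

theorem statement14_general
    (A : Type*) [NormedRing A] [NormedAlgebra ℂ A]
    (E : Type*) [NormedAddCommGroup E] [NormedSpace ℝ E]
    (U : Set E)
    (μ₀ μ₁ : ℂ) (hμ : μ₀ ≠ μ₁)
    (β βs : E → (E →L[ℝ] A))
    (hβdiff : ∀ u ∈ U, DifferentiableAt ℝ β u)
    (hβsdiff : ∀ u ∈ U, DifferentiableAt ℝ βs u)
    (hβflat : ∀ u ∈ U, ∀ v w : E,
      fderiv ℝ β u v w - fderiv ℝ β u w v + β u v * β u w - β u w * β u v = 0)
    (hβsflat : ∀ u ∈ U, ∀ v w : E,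
      fderiv ℝ βs u v w - fderiv ℝ βs u w v + βs u v * βs u w - βs u w * βs u v = 0)
    (ω : E → E → Matrix (Fin 2) (Fin 2) A)
    (hω : ∀ u v, ω u v = (μ₁ - μ₀)⁻¹ •
      Matrix.of ![![μ₁ • βs u v - μ₀ • β u v, (μ₀ * μ₁) • (β u v - βs u v)],
        ![βs u v - β u v, μ₁ • β u v - μ₀ • βs u v]]) :
    ∀ u ∈ U, ∀ v w : E,
      fderiv ℝ (fun x => ω x w) u v - fderiv ℝ (fun x => ω x v) u w
        + ω u v * ω u w - ω u w * ω u v = 0 := by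
  intro u hu v w
  have hω_eq : ω = fun x y => diagonalConj μ₀ μ₁ (β x y, βs x y) := funext₂ hω
  have hβ y := (hβdiff u hu).clm_apply (differentiableAt_const y)
  have hβs y := (hβsdiff u hu).clm_apply (differentiableAt_const y)
  change curvature ω u v w = 0
  rw [hω_eq, curvature_comp_of_map_mul _ (diagonalConj_mul hμ) fun y => (hβ y).prodMk (hβs y),
    curvature_prodMk hβ hβs, curvature_clm_apply (hβdiff u hu),
    curvature_clm_apply (hβsdiff u hu), hβflat u hu v w, hβsflat u hu v w, Prod.mk_zero_zero,
    map_zero]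

/-- Let `A` be a complex unital associative normed algebra, `E` a
real normed space, `U ⊆ E` open, `μ₀ ≠ μ₁ ∈ ℂ`, and let `β, β*` be differentiable flat
`A`-valued 1-forms on `U`.  Then the `2×2`-matrix-valued 1-form
`ω = (1/(μ₁-μ₀)) [[μ₁β* - μ₀β, μ₀μ₁(β - β*)], [β* - β, μ₁β - μ₀β*]]` is flat. -/
theorem statement14
    (A : Type*) [NormedRing A] [NormedAlgebra ℂ A]
    (E : Type*) [NormedAddCommGroup E] [NormedSpace ℝ E]
    (U : Set E) (hU : IsOpen U)
    (μ₀ μ₁ : ℂ) (hμ : μ₀ ≠ μ₁)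
    (β βs : E → (E →L[ℝ] A))
    (hβdiff : ∀ u ∈ U, DifferentiableAt ℝ β u)
    (hβsdiff : ∀ u ∈ U, DifferentiableAt ℝ βs u)
    (hβflat : ∀ u ∈ U, ∀ v w : E,
      fderiv ℝ β u v w - fderiv ℝ β u w v + β u v * β u w - β u w * β u v = 0)
    (hβsflat : ∀ u ∈ U, ∀ v w : E,
      fderiv ℝ βs u v w - fderiv ℝ βs u w v + βs u v * βs u w - βs u w * βs u v = 0)
    (ω : E → E → Matrix (Fin 2) (Fin 2) A)
    (hω : ∀ u v, ω u v = (μ₁ - μ₀)⁻¹ •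
      Matrix.of ![![μ₁ • βs u v - μ₀ • β u v, (μ₀ * μ₁) • (β u v - βs u v)],
        ![βs u v - β u v, μ₁ • β u v - μ₀ • βs u v]]) :
    ∀ u ∈ U, ∀ v w : E,
      fderiv ℝ (fun x => ω x w) u v - fderiv ℝ (fun x => ω x v) u w
        + ω u v * ω u w - ω u w * ω u v = 0 :=
  statement14_general A E U μ₀ μ₁ hμ β βs hβdiff hβsdiff hβflat hβsflat ω hω
end
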